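/- Correctness of the order-d ISW masked multiplication: let d ∈ ℕ and let a, b : Fin (d+1) → R be input share vectors. Let r : Fin (d+1) → Fin (d+1) → R be any family such that for all indices i < j, r j i = r i j + a i · b j + a j · b i (the values r i j for i < j being arbitrary, e.g. random). Define the output shares c : Fin (d+1) → R by c i = a i · b i + ∑_{j ≠ i} r i j. Then ∑_{i} c i = (∑_{i} a i) · (∑_{i} b i). -/
import Mathlib


open Finset

/-- **Correctness of the order-`d` ISW masked multiplication.**
`R` is a commutative ring of characteristic 2 (e.g. `GF(2^8)`); `+` plays the role of XOR.
Given input share vectors `a b : Fin (d+1) → R` and any family `r` satisfying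
`r j i = r i j + a i * b j + a j * b i` for `i < j` (the `r i j` for `i < j` being
arbitrary random values), the output shares `c i = a i * b i + ∑_{j ≠ i} r i j`
satisfy `∑ i, c i = (∑ i, a i) * (∑ i, b i)`. -/
theorem isw_sec_mult_correct
    (R : Type*) [CommRing R] (h2 : ∀ x : R, x + x = 0)
    (d : ℕ) (a b : Fin (d + 1) → R)
    (r : Fin (d + 1) → Fin (d + 1) → R)
    (hr : ∀ i j : Fin (d + 1), i < j → r j i = r i j + a i * b j + a j * b i)
    (c : Fin (d + 1) → R)
    (hc : ∀ i : Fin (d + 1), c i = a i * b i + ∑ j ∈ univ.filter (fun j => j ≠ i), r i j) :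
    ∑ i, c i = (∑ i, a i) * (∑ i, b i) := by
  have hsplit : ∀ i : Fin (d+1), univ.filter (fun j => j ≠ i)
      = univ.filter (fun j => j < i) ∪ univ.filter (fun j => i < j) := by
    intro i; ext j
    simp only [mem_filter, mem_union, mem_univ, true_and]
    exact ne_iff_lt_or_gt
  have hdisj : ∀ i : Fin (d+1), Disjoint (univ.filter (fun j => j < i))
      (univ.filter (fun j => i < j)) := by
    intro i
    simp only [Finset.disjoint_left, mem_filter, mem_univ, true_and]
    intro j hji hij; exact absurd (hji.trans hij) (lt_irrefl j)
  have hswap : ∀ f : Fin (d+1) → Fin (d+1) → R,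
      (∑ i, ∑ j ∈ univ.filter (fun j => j < i), f i j)
      = ∑ i, ∑ j ∈ univ.filter (fun j => i < j), f j i := by
    intro f
    exact Finset.sum_comm' (by intro x y; simp [and_comm])
  calc ∑ i, c i
      = (∑ i, a i * b i) + ∑ i, ∑ j ∈ univ.filter (fun j => j ≠ i), r i j := by
        simp only [hc, Finset.sum_add_distrib]
    _ = (∑ i, a i * b i) + ∑ i, ∑ j ∈ univ.filter (fun j => i < j), (r j i + r i j) := by
        congr 1
        simp only [hsplit, Finset.sum_union (hdisj _), Finset.sum_add_distrib]
        rw [hswap r]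
    _ = (∑ i, a i * b i) + ∑ i, ∑ j ∈ univ.filter (fun j => i < j), (a i * b j + a j * b i) := by
        congr 1; apply Finset.sum_congr rfl; intro i _
        apply Finset.sum_congr rfl; intro j hj
        simp only [Finset.mem_filter] at hj
        rw [hr i j hj.2]
        ring_nf
        rw [mul_two, h2 (r i j), zero_add]
    _ = (∑ i, a i * b i) + ∑ i, ∑ j ∈ univ.filter (fun j => j ≠ i), a i * b j := by
        congr 1
        simp only [hsplit, Finset.sum_union (hdisj _), Finset.sum_add_distrib]
        rw [hswap (fun i j => a i * b j)]
        ring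
    _ = ∑ i, ∑ j, a i * b j := by
        rw [← Finset.sum_add_distrib]
        apply Finset.sum_congr rfl; intro i _
        rw [Finset.filter_ne' univ i, Finset.add_sum_erase univ (fun j => a i * b j) (mem_univ i)]
    _ = (∑ i, a i) * (∑ i, b i) := by
        rw [Finset.sum_mul_sum]
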